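/- arXiv:math/0503431 — 3 statements merged into one kernel-verified Lean document; each statement's English description precedes it below -/
import Mathlib

section
/- Let H be a real Hilbert space, ε > 0, T > 0. Suppose v : [0,T] → H is continuously differentiable, g : [0,T] → H is continuous, and ε·v'(t) + v(t) = g(t) for all t ∈ [0,T]. Then for every t ∈ [0,T], ‖v(t)‖ ≤ (sup_{s ∈ [0,T]} ‖g(s)‖) + ‖v(0)‖. -/
open Set

/-- Abstract form of Lemma 6.1: if `ε • v' + v = g` on `[0,T]`, then
`‖v t‖ ≤ sup_{[0,T]} ‖g‖ + ‖v 0‖`, independently of `ε`. -/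
theorem stmt_0
    {H : Type*} [NormedAddCommGroup H] [InnerProductSpace ℝ H] [CompleteSpace H]
    (ε T : ℝ) (hε : 0 < ε) (hT : 0 < T)
    (v v' g : ℝ → H)
    (hv : ∀ t ∈ Icc (0 : ℝ) T, HasDerivAt v (v' t) t)
    (hv' : ContinuousOn v' (Icc (0 : ℝ) T))
    (hg : ContinuousOn g (Icc (0 : ℝ) T))
    (heq : ∀ t ∈ Icc (0 : ℝ) T, ε • v' t + v t = g t) :
    ∀ t ∈ Icc (0 : ℝ) T,
      ‖v t‖ ≤ sSup ((fun s => ‖g s‖) '' Icc (0 : ℝ) T) + ‖v 0‖ := by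
  intro t ht
  obtain ⟨ht0, htT⟩ := ht
  set M := sSup ((fun s => ‖g s‖) '' Icc (0 : ℝ) T) with hMdef
  have hbdd : BddAbove ((fun s => ‖g s‖) '' Icc (0 : ℝ) T) :=
    (isCompact_Icc.image_of_continuousOn hg.norm).bddAbove
  have hMle : ∀ s ∈ Icc (0 : ℝ) T, ‖g s‖ ≤ M := fun s hs => le_csSup hbdd ⟨s, hs, rfl⟩
  have hM0 : 0 ≤ M := le_trans (norm_nonneg _) (hMle 0 ⟨le_refl 0, hT.le⟩)
  set w : ℝ → H := fun s => Real.exp (s / ε) • v s with hwdef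
  have hsub : Icc (0 : ℝ) t ⊆ Icc 0 T := Icc_subset_Icc le_rfl htT
  have hwderiv : ∀ s ∈ Icc (0 : ℝ) t,
      HasDerivAt w ((Real.exp (s / ε) / ε) • g s) s := by
    intro s hs
    have hsT : s ∈ Icc (0 : ℝ) T := hsub hs
    have hc : HasDerivAt (fun x => Real.exp (x / ε)) (Real.exp (s / ε) / ε) s := by
      have := (Real.hasDerivAt_exp (s / ε)).comp s ((hasDerivAt_id s).div_const ε)
      simpa [div_eq_mul_inv, mul_comm, Function.comp_def] using this
    have h2 := hc.smul (hv s hsT)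
    have h3 : Real.exp (s / ε) • v' s + (Real.exp (s / ε) / ε) • v s
        = (Real.exp (s / ε) / ε) • g s := by
      rw [← heq s hsT, smul_add, smul_smul, div_mul_cancel₀ _ hε.ne']
    rw [h3] at h2
    exact h2
  have hcont : ContinuousOn (fun s => (Real.exp (s / ε) / ε) • g s) (Icc (0 : ℝ) t) := by
    exact (((Real.continuous_exp.comp (continuous_id.div_const ε)).div_const
      ε).continuousOn).smul (hg.mono hsub)
  have hInt : IntervalIntegrable (fun s => (Real.exp (s / ε) / ε) • g s)
      MeasureTheory.volume 0 t := by
    apply ContinuousOn.intervalIntegrable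
    rwa [uIcc_of_le ht0]
  have hFTC : (∫ s in (0:ℝ)..t, (Real.exp (s / ε) / ε) • g s) = w t - w 0 := by
    apply intervalIntegral.integral_eq_sub_of_hasDerivAt
    · intro s hs
      exact hwderiv s (by rwa [uIcc_of_le ht0] at hs)
    · exact hInt
  -- bound the integral
  have hIntBound : IntervalIntegrable (fun s => M * (Real.exp (s / ε) / ε))
      MeasureTheory.volume 0 t := by
    apply ContinuousOn.intervalIntegrable
    exact (continuous_const.mul ((Real.continuous_exp.comp
      (continuous_id.div_const ε)).div_const ε)).continuousOn
  have hexp : (∫ s in (0:ℝ)..t, M * (Real.exp (s / ε) / ε))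
      = M * Real.exp (t / ε) - M * Real.exp (0 / ε) := by
    apply intervalIntegral.integral_eq_sub_of_hasDerivAt
    · intro s _
      have hc : HasDerivAt (fun x => Real.exp (x / ε)) (Real.exp (s / ε) / ε) s := by
        have := (Real.hasDerivAt_exp (s / ε)).comp s ((hasDerivAt_id s).div_const ε)
        simpa [div_eq_mul_inv, mul_comm, Function.comp_def] using this
      simpa using hc.const_mul M
    · exact hIntBound
  have hnorm : ‖w t - w 0‖ ≤ M * Real.exp (t / ε) - M := by
    rw [← hFTC]
    calc ‖∫ s in (0:ℝ)..t, (Real.exp (s / ε) / ε) • g s‖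
        ≤ ∫ s in (0:ℝ)..t, ‖(Real.exp (s / ε) / ε) • g s‖ :=
          intervalIntegral.norm_integral_le_integral_norm ht0
      _ ≤ ∫ s in (0:ℝ)..t, M * (Real.exp (s / ε) / ε) := by
          apply intervalIntegral.integral_mono_on ht0 hInt.norm hIntBound
          intro s hs
          rw [norm_smul, Real.norm_eq_abs, abs_of_pos (by positivity)]
          rw [mul_comm M _]
          exact mul_le_mul_of_nonneg_left (hMle s (hsub hs)) (by positivity)
      _ = M * Real.exp (t / ε) - M := by rw [hexp]; simp
  have hw0 : w 0 = v 0 := by simp [hwdef]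
  have hwt : ‖w t‖ ≤ ‖v 0‖ + (M * Real.exp (t / ε) - M) := by
    calc ‖w t‖ = ‖w 0 + (w t - w 0)‖ := by congr 1; abel
      _ ≤ ‖w 0‖ + ‖w t - w 0‖ := norm_add_le _ _
      _ ≤ ‖v 0‖ + (M * Real.exp (t / ε) - M) :=
          add_le_add (le_of_eq (congrArg norm hw0)) hnorm
  have hwnorm : ‖w t‖ = Real.exp (t / ε) * ‖v t‖ := by
    rw [hwdef]; simp [norm_smul, Real.norm_eq_abs, abs_of_pos (Real.exp_pos _)]
  have hE1 : (1 : ℝ) ≤ Real.exp (t / ε) :=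
    Real.one_le_exp (by positivity)
  have hEpos : 0 < Real.exp (t / ε) := Real.exp_pos _
  rw [hwnorm] at hwt
  have hv0 : 0 ≤ ‖v 0‖ := norm_nonneg _
  nlinarith [norm_nonneg (v t)]
end

section
/- Let a > 0 and N > 0 satisfy 27·a·N² < 2. Let γ : [0,T] → ℝ be continuous and nonnegative, with γ(0) ≤ N, and suppose a·γ(t)³ − γ(t) + N ≥ 0 for all t ∈ [0,T]. Then γ(t) < 3N for all t ∈ [0,T]. -/
open Set

/-! If `γ` reached `3N` it would do so at some point of `[0, T]` by the intermediate value
theorem, since `γ 0 ≤ N < 3N`. But the cubic `a x³ - x + N` takes the value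
`N (27 a N² - 2) < 0` at `x = 3N`, contradicting `a γ³ - γ + N ≥ 0`. -/

lemma cubic_at_three_mul_neg {a N : ℝ} (hN : 0 < N) (hkey : 27 * a * N ^ 2 < 2) :
    a * (3 * N) ^ 3 - 3 * N + N < 0 := by
  have hfactor : a * (3 * N) ^ 3 - 3 * N + N = N * (27 * a * N ^ 2 - 2) := by ring
  rw [hfactor]
  exact mul_neg_of_pos_of_neg hN (by linarith)

lemma ContinuousOn.lt_on_Icc_of_ne {f : ℝ → ℝ} {a b c : ℝ} (hf : ContinuousOn f (Icc a b))
    (hfa : f a < c) (hne : ∀ t ∈ Icc a b, f t ≠ c) : ∀ t ∈ Icc a b, f t < c := by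
  intro t ht
  by_contra! hct
  have hsub : Icc a t ⊆ Icc a b := Icc_subset_Icc le_rfl ht.2
  obtain ⟨s, hs, hfs⟩ := intermediate_value_Icc ht.1 (hf.mono hsub) ⟨hfa.le, hct⟩
  exact hne s (hsub hs) hfs

theorem stmt_2_general
    (a N T : ℝ) (hN : 0 < N) (hkey : 27 * a * N ^ 2 < 2)
    (γ : ℝ → ℝ)
    (hcont : ContinuousOn γ (Icc (0 : ℝ) T))
    (h0 : γ 0 ≤ N)
    (hineq : ∀ t ∈ Icc (0 : ℝ) T, 0 ≤ a * γ t ^ 3 - γ t + N) :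
    ∀ t ∈ Icc (0 : ℝ) T, γ t < 3 * N := by
  refine hcont.lt_on_Icc_of_ne (by linarith) fun s hs hγs => ?_
  have hcubic := hineq s hs
  rw [hγs] at hcubic
  linarith [cubic_at_three_mul_neg hN hkey]

/-- Continuity/bootstrap argument of Section 9: if `27·a·N² < 2`, `γ` is continuous,
nonnegative, `γ 0 ≤ N`, and `a·γ³ − γ + N ≥ 0` on `[0,T]`, then `γ < 3N` on `[0,T]`. -/
theorem stmt_2
    (a N T : ℝ) (ha : 0 < a) (hN : 0 < N) (hkey : 27 * a * N ^ 2 < 2)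
    (γ : ℝ → ℝ)
    (hcont : ContinuousOn γ (Icc (0 : ℝ) T))
    (hnonneg : ∀ t ∈ Icc (0 : ℝ) T, 0 ≤ γ t)
    (h0 : γ 0 ≤ N)
    (hineq : ∀ t ∈ Icc (0 : ℝ) T, 0 ≤ a * γ t ^ 3 - γ t + N) :
    ∀ t ∈ Icc (0 : ℝ) T, γ t < 3 * N :=
  stmt_2_general a N T hN hkey γ hcont h0 hineq
end

section
/- Let η : ℝ³ → ℝ³ be twice continuously differentiable with det ∇η(x) = 1 for all x. Then for every k ∈ {1,2,3} and every x, ∑_{i,j=1}^{3} ∂_k[(Cof ∇η)_{ij}](x) · ∂_j η^i(x) = 0, where Cof ∇η denotes the cofactor matrix of the Jacobian. -/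
open scoped BigOperators

/-- The Levi-Civita symbol on three indices. -/
def levicivita (i j k : Fin 3) : ℝ :=
  if (i, j, k) = (0, 1, 2) ∨ (i, j, k) = (1, 2, 0) ∨ (i, j, k) = (2, 0, 1) then 1
  else if (i, j, k) = (0, 2, 1) ∨ (i, j, k) = (2, 1, 0) ∨ (i, j, k) = (1, 0, 2) then -1
  else 0

/-- Partial derivative `∂_j f` of a scalar function on `ℝ³`. -/
noncomputable def pderiv3 (j : Fin 3) (f : (Fin 3 → ℝ) → ℝ) (x : Fin 3 → ℝ) : ℝ :=
  fderiv ℝ f x (Pi.single j 1)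

/-- The `(i,j)` entry of the cofactor matrix of the Jacobian `∇η`. -/
noncomputable def cofJac (η : (Fin 3 → ℝ) → (Fin 3 → ℝ)) (i j : Fin 3)
    (x : Fin 3 → ℝ) : ℝ :=
  (1 / 2) * ∑ m : Fin 3, ∑ n : Fin 3, ∑ p : Fin 3, ∑ q : Fin 3,
    levicivita i m n * levicivita j p q *
      pderiv3 p (fun y => η y m) x * pderiv3 q (fun y => η y n) x

/-- The Jacobian matrix `∇η` of `η : ℝ³ → ℝ³`, `(∇η)_{ij} = ∂_j η^i`. -/
noncomputable def jac3 (η : (Fin 3 → ℝ) → (Fin 3 → ℝ)) (x : Fin 3 → ℝ) :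
    Matrix (Fin 3) (Fin 3) ℝ :=
  Matrix.of fun i j => pderiv3 j (fun y => η y i) x

/- ### Auxiliary lemmas -/

lemma pderiv3_mul {f g : (Fin 3 → ℝ) → ℝ} {x : Fin 3 → ℝ}
    (hf : DifferentiableAt ℝ f x) (hg : DifferentiableAt ℝ g x) (k : Fin 3) :
    pderiv3 k (fun y => f y * g y) x = pderiv3 k f x * g x + f x * pderiv3 k g x := by
  simp only [pderiv3, fderiv_fun_mul hf hg, ContinuousLinearMap.add_apply,
    ContinuousLinearMap.smul_apply, smul_eq_mul]
  ring

lemma pderiv3_const_mul {f : (Fin 3 → ℝ) → ℝ} {x : Fin 3 → ℝ}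
    (hf : DifferentiableAt ℝ f x) (c : ℝ) (k : Fin 3) :
    pderiv3 k (fun y => c * f y) x = c * pderiv3 k f x := by
  simp only [pderiv3, fderiv_const_mul hf c, ContinuousLinearMap.smul_apply, smul_eq_mul]

lemma pderiv3_sum {ι : Type*} (s : Finset ι) (f : ι → (Fin 3 → ℝ) → ℝ) {x : Fin 3 → ℝ}
    (h : ∀ i ∈ s, DifferentiableAt ℝ (f i) x) (k : Fin 3) :
    pderiv3 k (fun y => ∑ i ∈ s, f i y) x = ∑ i ∈ s, pderiv3 k (f i) x := by
  simp only [pderiv3, fderiv_fun_sum h, ContinuousLinearMap.sum_apply]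

lemma pderiv3_sub {f g : (Fin 3 → ℝ) → ℝ} {x : Fin 3 → ℝ}
    (hf : DifferentiableAt ℝ f x) (hg : DifferentiableAt ℝ g x) (k : Fin 3) :
    pderiv3 k (fun y => f y - g y) x = pderiv3 k f x - pderiv3 k g x := by
  simp only [pderiv3, fderiv_fun_sub hf hg, ContinuousLinearMap.sub_apply]

lemma pderiv3_add {f g : (Fin 3 → ℝ) → ℝ} {x : Fin 3 → ℝ}
    (hf : DifferentiableAt ℝ f x) (hg : DifferentiableAt ℝ g x) (k : Fin 3) :
    pderiv3 k (fun y => f y + g y) x = pderiv3 k f x + pderiv3 k g x := by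
  simp only [pderiv3, fderiv_fun_add hf hg, ContinuousLinearMap.add_apply]

lemma pderiv3_mul3 {f g h : (Fin 3 → ℝ) → ℝ} {x : Fin 3 → ℝ}
    (hf : DifferentiableAt ℝ f x) (hg : DifferentiableAt ℝ g x)
    (hh : DifferentiableAt ℝ h x) (k : Fin 3) :
    pderiv3 k (fun y => f y * g y * h y) x =
      pderiv3 k f x * g x * h x + f x * pderiv3 k g x * h x +
        f x * g x * pderiv3 k h x := by
  rw [pderiv3_mul (hf.fun_mul hg) hh, pderiv3_mul hf hg]
  ring

/-- Each entry of the Jacobian is a differentiable function of `x` if `η` is `C²`. -/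
lemma hg_diff {η : (Fin 3 → ℝ) → (Fin 3 → ℝ)} (hη : ContDiff ℝ 2 η) (m p : Fin 3) :
    Differentiable ℝ (fun y => pderiv3 p (fun z => η z m) y) := by
  have h1 : ContDiff ℝ 2 (fun z => η z m) :=
    (ContinuousLinearMap.proj (R := ℝ) (φ := fun _ : Fin 3 => ℝ) m).contDiff.comp hη
  have h2 : ContDiff ℝ 1 (fderiv ℝ (fun z => η z m)) := h1.fderiv_right (by norm_num)
  simp only [pderiv3]
  exact (h2.differentiable one_ne_zero).clm_apply (differentiable_const _)

/-- Product-rule expansion of `∂_k (Cof ∇η)_{ij}`. -/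
lemma cof_deriv {η : (Fin 3 → ℝ) → (Fin 3 → ℝ)} (hη : ContDiff ℝ 2 η)
    (i j k : Fin 3) (x : Fin 3 → ℝ) :
    pderiv3 k (fun y => cofJac η i j y) x =
      (1 / 2) * ∑ m : Fin 3, ∑ n : Fin 3, ∑ p : Fin 3, ∑ q : Fin 3,
        levicivita i m n * levicivita j p q *
          (pderiv3 k (fun y => pderiv3 p (fun z => η z m) y) x *
              pderiv3 q (fun z => η z n) x +
            pderiv3 p (fun z => η z m) x *
              pderiv3 k (fun y => pderiv3 q (fun z => η z n) y) x) := by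
  have hG := hg_diff hη
  have hterm : ∀ (m n p q : Fin 3), DifferentiableAt ℝ
      (fun y => levicivita i m n * levicivita j p q *
        pderiv3 p (fun z => η z m) y * pderiv3 q (fun z => η z n) y) x :=
    fun m n p q => ((((hG m p) x).const_mul _).mul ((hG n q) x))
  simp only [cofJac]
  rw [pderiv3_const_mul]
  · congr 1
    rw [pderiv3_sum _ _ (fun m _ =>
      DifferentiableAt.fun_sum (fun n _ =>
        DifferentiableAt.fun_sum (fun p _ =>
          DifferentiableAt.fun_sum (fun q _ => hterm m n p q))))]
    refine Finset.sum_congr rfl fun m _ => ?_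
    rw [pderiv3_sum _ _ (fun n _ =>
        DifferentiableAt.fun_sum (fun p _ =>
          DifferentiableAt.fun_sum (fun q _ => hterm m n p q)))]
    refine Finset.sum_congr rfl fun n _ => ?_
    rw [pderiv3_sum _ _ (fun p _ =>
          DifferentiableAt.fun_sum (fun q _ => hterm m n p q))]
    refine Finset.sum_congr rfl fun p _ => ?_
    rw [pderiv3_sum _ _ (fun q _ => hterm m n p q)]
    refine Finset.sum_congr rfl fun q _ => ?_
    rw [pderiv3_mul (((hG m p) x).const_mul _) ((hG n q) x),
        pderiv3_const_mul ((hG m p) x)]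
    ring
  · exact DifferentiableAt.fun_sum (fun m _ =>
      DifferentiableAt.fun_sum (fun n _ =>
        DifferentiableAt.fun_sum (fun p _ =>
          DifferentiableAt.fun_sum (fun q _ => hterm m n p q))))

set_option maxHeartbeats 4000000 in
set_option maxRecDepth 4000 in
/-- The purely algebraic identity: the quadratic Levi-Civita expression contracted
with `A`, equals twice the directional derivative of `det` at `A` in direction `B`. -/
lemma alg_core (A B : Fin 3 → Fin 3 → ℝ)
    (hE : B 0 0 * A 1 1 * A 2 2 + A 0 0 * B 1 1 * A 2 2 + A 0 0 * A 1 1 * B 2 2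
        - (B 0 0 * A 1 2 * A 2 1 + A 0 0 * B 1 2 * A 2 1 + A 0 0 * A 1 2 * B 2 1)
        - (B 0 1 * A 1 0 * A 2 2 + A 0 1 * B 1 0 * A 2 2 + A 0 1 * A 1 0 * B 2 2)
        + (B 0 1 * A 1 2 * A 2 0 + A 0 1 * B 1 2 * A 2 0 + A 0 1 * A 1 2 * B 2 0)
        + (B 0 2 * A 1 0 * A 2 1 + A 0 2 * B 1 0 * A 2 1 + A 0 2 * A 1 0 * B 2 1)
        - (B 0 2 * A 1 1 * A 2 0 + A 0 2 * B 1 1 * A 2 0 + A 0 2 * A 1 1 * B 2 0) = 0) :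
    ∑ i : Fin 3, ∑ j : Fin 3,
      ((1 / 2) * ∑ m : Fin 3, ∑ n : Fin 3, ∑ p : Fin 3, ∑ q : Fin 3,
        levicivita i m n * levicivita j p q *
          (B m p * A n q + A m p * B n q)) * A i j = 0 := by
  simp only [Fin.sum_univ_three]
  simp only [levicivita, Prod.mk.injEq, Fin.isValue, Fin.reduceEq, and_self, and_true,
    and_false, false_and, true_and, or_self, or_false, false_or, or_true, true_or,
    if_true, if_false, reduceIte, one_mul, mul_one, neg_mul, mul_neg, neg_neg,
    zero_mul, mul_zero, add_zero, zero_add, neg_zero]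
  linear_combination 2 * hE

/-- If `η` is `C²` with `det ∇η ≡ 1`, then
`∑_{i,j} ∂_k (Cof ∇η)_{ij} · ∂_j η^i = 0` for every `k`. -/
theorem stmt_7
    (η : (Fin 3 → ℝ) → (Fin 3 → ℝ)) (hη : ContDiff ℝ 2 η)
    (hdet : ∀ x, (jac3 η x).det = 1) :
    ∀ (k : Fin 3) (x : Fin 3 → ℝ),
      ∑ i : Fin 3, ∑ j : Fin 3,
        pderiv3 k (fun y => cofJac η i j y) x * pderiv3 j (fun y => η y i) x = 0 := by
  intro k x
  have hG := hg_diff hη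
  set A : Fin 3 → Fin 3 → ℝ := fun m p => pderiv3 p (fun z => η z m) x with hA
  set B : Fin 3 → Fin 3 → ℝ :=
    fun m p => pderiv3 k (fun y => pderiv3 p (fun z => η z m) y) x with hB
  -- the derivative of the (constant) determinant vanishes
  have h0 : pderiv3 k (fun y => (jac3 η y).det) x = 0 := by
    have hconst : (fun y => (jac3 η y).det) = fun _ => (1 : ℝ) := funext hdet
    rw [hconst]
    simp [pderiv3]
  -- expand the determinant
  have hfe : (fun y => (jac3 η y).det) = fun y =>
      pderiv3 0 (fun z => η z 0) y * pderiv3 1 (fun z => η z 1) y * pderiv3 2 (fun z => η z 2) y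
      - pderiv3 2 (fun z => η z 0) y * pderiv3 1 (fun z => η z 1) y * pderiv3 0 (fun z => η z 2) y
      - (pderiv3 1 (fun z => η z 0) y * pderiv3 0 (fun z => η z 1) y * pderiv3 2 (fun z => η z 2) y
        - pderiv3 1 (fun z => η z 0) y * pderiv3 2 (fun z => η z 1) y * pderiv3 0 (fun z => η z 2) y)
      + (pderiv3 2 (fun z => η z 0) y * pderiv3 0 (fun z => η z 1) y * pderiv3 1 (fun z => η z 2) y
        - pderiv3 0 (fun z => η z 0) y * pderiv3 2 (fun z => η z 1) y * pderiv3 1 (fun z => η z 2) y) := by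
    funext y
    simp only [jac3, Matrix.det_fin_three, Matrix.of_apply]
    ring
  have hE : B 0 0 * A 1 1 * A 2 2 + A 0 0 * B 1 1 * A 2 2 + A 0 0 * A 1 1 * B 2 2
        - (B 0 0 * A 1 2 * A 2 1 + A 0 0 * B 1 2 * A 2 1 + A 0 0 * A 1 2 * B 2 1)
        - (B 0 1 * A 1 0 * A 2 2 + A 0 1 * B 1 0 * A 2 2 + A 0 1 * A 1 0 * B 2 2)
        + (B 0 1 * A 1 2 * A 2 0 + A 0 1 * B 1 2 * A 2 0 + A 0 1 * A 1 2 * B 2 0)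
        + (B 0 2 * A 1 0 * A 2 1 + A 0 2 * B 1 0 * A 2 1 + A 0 2 * A 1 0 * B 2 1)
        - (B 0 2 * A 1 1 * A 2 0 + A 0 2 * B 1 1 * A 2 0 + A 0 2 * A 1 1 * B 2 0) = 0 := by
    rw [← h0, hfe]
    have d1 : DifferentiableAt ℝ (fun y =>
        pderiv3 0 (fun z => η z 0) y * pderiv3 1 (fun z => η z 1) y * pderiv3 2 (fun z => η z 2) y) x :=
      (((hG 0 0) x).mul ((hG 1 1) x)).mul ((hG 2 2) x)
    have d2 : DifferentiableAt ℝ (fun y =>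
        pderiv3 2 (fun z => η z 0) y * pderiv3 1 (fun z => η z 1) y * pderiv3 0 (fun z => η z 2) y) x :=
      (((hG 0 2) x).mul ((hG 1 1) x)).mul ((hG 2 0) x)
    have d3 : DifferentiableAt ℝ (fun y =>
        pderiv3 1 (fun z => η z 0) y * pderiv3 0 (fun z => η z 1) y * pderiv3 2 (fun z => η z 2) y) x :=
      (((hG 0 1) x).mul ((hG 1 0) x)).mul ((hG 2 2) x)
    have d4 : DifferentiableAt ℝ (fun y =>
        pderiv3 1 (fun z => η z 0) y * pderiv3 2 (fun z => η z 1) y * pderiv3 0 (fun z => η z 2) y) x :=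
      (((hG 0 1) x).mul ((hG 1 2) x)).mul ((hG 2 0) x)
    have d5 : DifferentiableAt ℝ (fun y =>
        pderiv3 2 (fun z => η z 0) y * pderiv3 0 (fun z => η z 1) y * pderiv3 1 (fun z => η z 2) y) x :=
      (((hG 0 2) x).mul ((hG 1 0) x)).mul ((hG 2 1) x)
    have d6 : DifferentiableAt ℝ (fun y =>
        pderiv3 0 (fun z => η z 0) y * pderiv3 2 (fun z => η z 1) y * pderiv3 1 (fun z => η z 2) y) x :=
      (((hG 0 0) x).mul ((hG 1 2) x)).mul ((hG 2 1) x)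
    rw [pderiv3_add ((d1.fun_sub d2).fun_sub (d3.fun_sub d4)) (d5.fun_sub d6),
        pderiv3_sub (d1.fun_sub d2) (d3.fun_sub d4), pderiv3_sub d1 d2, pderiv3_sub d3 d4,
        pderiv3_sub d5 d6,
        pderiv3_mul3 ((hG 0 0) x) ((hG 1 1) x) ((hG 2 2) x),
        pderiv3_mul3 ((hG 0 2) x) ((hG 1 1) x) ((hG 2 0) x),
        pderiv3_mul3 ((hG 0 1) x) ((hG 1 0) x) ((hG 2 2) x),
        pderiv3_mul3 ((hG 0 1) x) ((hG 1 2) x) ((hG 2 0) x),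
        pderiv3_mul3 ((hG 0 2) x) ((hG 1 0) x) ((hG 2 1) x),
        pderiv3_mul3 ((hG 0 0) x) ((hG 1 2) x) ((hG 2 1) x)]
    simp only [hA, hB]
    ring
  have key := alg_core A B hE
  rw [← key]
  refine Finset.sum_congr rfl fun i _ => Finset.sum_congr rfl fun j _ => ?_
  rw [cof_deriv hη i j k x]
end
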